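/- arXiv:2104.01977 — 3 statements merged into one kernel-verified Lean document; each statement's English description precedes it below -/
import Mathlib

section
/- Under the location-scale model with likelihood f(x|μ,τ) = (2π)^{-n/2} τ^{-n} det(U)^{-1/2} exp(-(x-μ1)ᵀU⁻¹(x-μ1)/(2τ²)) and improper prior π(μ,τ) ∝ 1/τ, if n > 2 and x is not a multiple of the all-ones vector, the marginal density m(x) = ∫₀^∞ ∫_{-∞}^∞ f(x|μ,τ)·(1/τ) dμ dτ equals Γ((n-1)/2)·(xᵀQx)^{-(n-1)/2} / (det(U)^{1/2} · 2π^{(n-1)/2} · √(1ᵀU⁻¹1)), where Q = U⁻¹ - (U⁻¹1 1ᵀU⁻¹)/(1ᵀU⁻¹1). -/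
/-!
Write `s = 1ᵀU⁻¹1`, `b = 1ᵀU⁻¹x` and `c = xᵀQx = xᵀU⁻¹x - b²/s`. Completing the square,
`(x - μ1)ᵀU⁻¹(x - μ1) = s (μ - b/s)² + c`, so the Gaussian integral in `μ` equals
`τ √(2π/s) exp(-c/(2τ²))`. The substitution `τ = 1/t` turns the remaining integral of
`τ^(-n) exp(-c/(2τ²))` into the Gamma integral `∫ t^(n-2) exp(-c t²/2) dt`, which converges
since `n > 1` and `c > 0`; the latter is the strict Cauchy–Schwarz inequality `b² < s · xᵀU⁻¹x`
for the inner product defined by `U⁻¹`, since `x` is not a multiple of `1`.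
-/

open Matrix Real MeasureTheory

theorem integral_exp_neg_mul_sub_sq (k m : ℝ) : ∫ μ : ℝ, exp (-(k * (μ - m) ^ 2)) = √(π / k) := by
  rw [integral_sub_right_eq_self (fun μ => exp (-(k * μ ^ 2))) m]
  simpa [neg_mul] using integral_gaussian k

namespace Matrix

variable {ι : Type*} [Fintype ι]

theorem IsSymm.dotProduct_mulVec_comm {R : Type*} [CommSemiring R] {A : Matrix ι ι R}
    (hA : A.IsSymm) (u v : ι → R) : u ⬝ᵥ A *ᵥ v = v ⬝ᵥ A *ᵥ u := by
  rw [dotProduct_mulVec, ← mulVec_transpose, hA.eq, dotProduct_comm]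

theorem IsSymm.dotProduct_sub_smul_mulVec_sub_smul {R : Type*} [CommRing R] {A : Matrix ι ι R}
    (hA : A.IsSymm) (x e : ι → R) (t : R) :
    (x - t • e) ⬝ᵥ A *ᵥ (x - t • e) =
      x ⬝ᵥ A *ᵥ x - 2 * t * (e ⬝ᵥ A *ᵥ x) + t ^ 2 * (e ⬝ᵥ A *ᵥ e) := by
  simp only [sub_dotProduct, mulVec_sub, dotProduct_sub, smul_dotProduct, dotProduct_smul,
    mulVec_smul, smul_eq_mul, hA.dotProduct_mulVec_comm x e]
  ring

theorem IsSymm.dotProduct_sub_smul_vecMulVec_mulVec {R : Type*} [CommRing R]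
    {A : Matrix ι ι R} (hA : A.IsSymm) (x e : ι → R) (c : R) :
    x ⬝ᵥ (A - c • vecMulVec (A *ᵥ e) (A *ᵥ e)) *ᵥ x = x ⬝ᵥ A *ᵥ x - c * (e ⬝ᵥ A *ᵥ x) ^ 2 := by
  rw [sub_mulVec, dotProduct_sub, smul_mulVec, vecMulVec_mulVec, dotProduct_smul,
    dotProduct_smul, dotProduct_comm (A *ᵥ e) x, hA.dotProduct_mulVec_comm x e, op_smul_eq_mul,
    smul_eq_mul, sq]

theorem IsSymm.dotProduct_sub_smul_mulVec_sub_smul_eq {K : Type*} [Field K]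
    {A : Matrix ι ι K} (hA : A.IsSymm) (x e : ι → K) (t : K) (hs : e ⬝ᵥ A *ᵥ e ≠ 0) :
    (x - t • e) ⬝ᵥ A *ᵥ (x - t • e) =
      (e ⬝ᵥ A *ᵥ e) * (t - (e ⬝ᵥ A *ᵥ x) / (e ⬝ᵥ A *ᵥ e)) ^ 2 +
        (x ⬝ᵥ A *ᵥ x - (e ⬝ᵥ A *ᵥ x) ^ 2 / (e ⬝ᵥ A *ᵥ e)) := by
  rw [hA.dotProduct_sub_smul_mulVec_sub_smul]
  field_simp
  ring

theorem PosDef.sq_dotProduct_mulVec_div_lt {A : Matrix ι ι ℝ} (hA : A.PosDef) {x e : ι → ℝ}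
    (hx : ¬∃ a : ℝ, x = a • e) :
    (e ⬝ᵥ A *ᵥ x) ^ 2 / (e ⬝ᵥ A *ᵥ e) < x ⬝ᵥ A *ᵥ x := by
  by_cases he : e = 0
  · subst he
    have hx0 : x ≠ 0 := fun h => hx ⟨0, by simp [h]⟩
    simpa using hA.dotProduct_mulVec_pos hx0
  have hs : 0 < e ⬝ᵥ A *ᵥ e := by simpa using hA.dotProduct_mulVec_pos he
  set t := (e ⬝ᵥ A *ᵥ x) / (e ⬝ᵥ A *ᵥ e)
  have hxt : x - t • e ≠ 0 := fun h => hx ⟨t, sub_eq_zero.mp h⟩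
  have hpos : 0 < (x - t • e) ⬝ᵥ A *ᵥ (x - t • e) := by simpa using hA.dotProduct_mulVec_pos hxt
  rw [(isHermitian_iff_isSymm.mp hA.isHermitian).dotProduct_sub_smul_mulVec_sub_smul_eq x e t
    hs.ne'] at hpos
  simpa [t] using hpos

theorem IsSymm.integral_exp_neg_dotProduct_sub_smul_mulVec_div {A : Matrix ι ι ℝ}
    (hA : A.IsSymm) (x e : ι → ℝ) (hs : e ⬝ᵥ A *ᵥ e ≠ 0) {τ : ℝ} (hτ : 0 ≤ τ) :
    ∫ μ : ℝ, Real.exp (-((x - μ • e) ⬝ᵥ A *ᵥ (x - μ • e)) / (2 * τ ^ 2)) =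
      √(2 * π / (e ⬝ᵥ A *ᵥ e)) * τ *
        Real.exp (-((x ⬝ᵥ A *ᵥ x - (e ⬝ᵥ A *ᵥ x) ^ 2 / (e ⬝ᵥ A *ᵥ e)) / 2) / τ ^ 2) := by
  set s := e ⬝ᵥ A *ᵥ e
  set c := x ⬝ᵥ A *ᵥ x - (e ⬝ᵥ A *ᵥ x) ^ 2 / s
  have hsplit : ∀ μ : ℝ, Real.exp (-((x - μ • e) ⬝ᵥ A *ᵥ (x - μ • e)) / (2 * τ ^ 2)) =
      Real.exp (-(c / 2) / τ ^ 2) *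
        Real.exp (-(s / (2 * τ ^ 2) * (μ - (e ⬝ᵥ A *ᵥ x) / s) ^ 2)) := fun μ => by
    rw [← Real.exp_add, hA.dotProduct_sub_smul_mulVec_sub_smul_eq x e μ hs]
    congr 1
    ring
  have hsqrt : √(π / (s / (2 * τ ^ 2))) = √(2 * π / s) * τ := by
    rw [div_div_eq_mul_div, show π * (2 * τ ^ 2) / s = 2 * π / s * τ ^ 2 by ring,
      sqrt_mul' _ (sq_nonneg τ), sqrt_sq hτ]
  simp_rw [hsplit, integral_const_mul, integral_exp_neg_mul_sub_sq, hsqrt, mul_comm]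

end Matrix

theorem integral_rpow_neg_mul_exp_neg_div_sq {p c : ℝ} (hp : 1 < p) (hc : 0 < c) :
    ∫ τ in Set.Ioi (0 : ℝ), τ ^ (-p) * exp (-c / τ ^ 2) =
      Gamma ((p - 1) / 2) / (2 * c ^ ((p - 1) / 2)) := by
  have key := integral_comp_rpow_Ioi (fun t => t ^ (p - 2) * exp (-c * t ^ (2 : ℝ)))
    (p := -1) (by norm_num)
  rw [integral_rpow_mul_exp_neg_mul_rpow two_pos (by linarith) hc] at key
  convert key using 1
  · refine setIntegral_congr_fun measurableSet_Ioi fun τ hτ => ?_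
    have hτ : 0 < τ := hτ
    have hpow : τ ^ (-p) = τ ^ (-1 - 1 : ℝ) * (τ ^ (-1 : ℝ)) ^ (p - 2) := by
      rw [← rpow_mul hτ.le, ← rpow_add hτ]
      ring_nf
    have hexp : -c / τ ^ 2 = -c * (τ ^ (-1 : ℝ)) ^ (2 : ℝ) := by
      rw [rpow_neg_one, rpow_two, inv_pow, div_eq_mul_inv]
    rw [hpow, hexp, smul_eq_mul, abs_neg, abs_one, one_mul, mul_assoc]
  · rw [show p - 2 + 1 = p - 1 by ring, neg_div, rpow_neg hc.le]
    ring

theorem locationScale_marginal_constant {N d s c G : ℝ} (hd : 0 < d) (hs : 0 < s) (hc : 0 < c) :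
    (2 * π) ^ (-N / 2) * d ^ (-(1 : ℝ) / 2) * √(2 * π / s) * (G / (2 * (c / 2) ^ ((N - 1) / 2))) =
      G * c ^ (-(N - 1) / 2) / (√d * (2 * π ^ ((N - 1) / 2)) * √s) := by
  have h2π : 0 < 2 * π := by positivity
  have hpow : (2 * π) ^ (-N / 2) * √(2 * π) = (2 ^ ((N - 1) / 2))⁻¹ * (π ^ ((N - 1) / 2))⁻¹ := by
    rw [sqrt_eq_rpow, ← rpow_add h2π, ← mul_inv, ← mul_rpow zero_le_two pi_pos.le,
      ← rpow_neg h2π.le]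
    ring_nf
  rw [eq_div_of_mul_eq (by positivity) hpow, sqrt_div h2π.le, div_rpow hc.le zero_le_two,
    neg_div 2 (N - 1), rpow_neg hc.le, neg_div 2 (1 : ℝ), rpow_neg hd.le, ← sqrt_eq_rpow]
  have : (0 : ℝ) < 2 ^ ((N - 1) / 2) := by positivity
  field_simp

theorem stmt5 {n : ℕ} (hn : 2 < n) (U : Matrix (Fin n) (Fin n) ℝ) (hU : U.PosDef)
    (x : Fin n → ℝ) (hx : ¬∃ a : ℝ, x = a • (fun _ => 1 : Fin n → ℝ)) :
    (∫ τ in Set.Ioi (0 : ℝ), ∫ μ : ℝ,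
        (2 * π) ^ (-(n : ℝ) / 2) * τ ^ (-(n : ℝ)) * (U.det) ^ (-(1 : ℝ) / 2) *
          Real.exp (-((x - μ • (fun _ => 1 : Fin n → ℝ)) ⬝ᵥ
              (U⁻¹ *ᵥ (x - μ • (fun _ => 1 : Fin n → ℝ)))) / (2 * τ ^ 2)) * (1 / τ)) =
      Real.Gamma (((n : ℝ) - 1) / 2) *
          (x ⬝ᵥ ((U⁻¹ -
              ((fun _ => 1 : Fin n → ℝ) ⬝ᵥ (U⁻¹ *ᵥ (fun _ => 1 : Fin n → ℝ)))⁻¹ •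
                vecMulVec (U⁻¹ *ᵥ (fun _ => 1 : Fin n → ℝ))
                  (U⁻¹ *ᵥ (fun _ => 1 : Fin n → ℝ))) *ᵥ x)) ^ (-((n : ℝ) - 1) / 2) /
        (Real.sqrt U.det * (2 * π ^ (((n : ℝ) - 1) / 2)) *
          Real.sqrt ((fun _ => 1 : Fin n → ℝ) ⬝ᵥ (U⁻¹ *ᵥ (fun _ => 1 : Fin n → ℝ)))) := by
  set e : Fin n → ℝ := fun _ => 1
  have hA : U⁻¹.PosDef := hU.inv
  have hA_symm : U⁻¹.IsSymm := isHermitian_iff_isSymm.mp hA.isHermitian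
  have he : e ≠ 0 := fun h => one_ne_zero (congrFun h ⟨0, by omega⟩)
  have hs : 0 < e ⬝ᵥ U⁻¹ *ᵥ e := by simpa using hA.dotProduct_mulVec_pos he
  obtain ⟨c, hc_eq⟩ : ∃ c, x ⬝ᵥ U⁻¹ *ᵥ x - (e ⬝ᵥ U⁻¹ *ᵥ x) ^ 2 / (e ⬝ᵥ U⁻¹ *ᵥ e) = c := ⟨_, rfl⟩
  have hc : 0 < c := hc_eq ▸ sub_pos.mpr (hA.sq_dotProduct_mulVec_div_lt hx)
  have hQ : x ⬝ᵥ (U⁻¹ - (e ⬝ᵥ U⁻¹ *ᵥ e)⁻¹ • vecMulVec (U⁻¹ *ᵥ e) (U⁻¹ *ᵥ e)) *ᵥ x = c := by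
    rw [hA_symm.dotProduct_sub_smul_vecMulVec_mulVec, ← hc_eq]
    ring
  have hinner : ∀ τ ∈ Set.Ioi (0 : ℝ), ∫ μ : ℝ,
      (2 * π) ^ (-(n : ℝ) / 2) * τ ^ (-(n : ℝ)) * (U.det) ^ (-(1 : ℝ) / 2) *
        Real.exp (-((x - μ • e) ⬝ᵥ (U⁻¹ *ᵥ (x - μ • e))) / (2 * τ ^ 2)) * (1 / τ) =
      (2 * π) ^ (-(n : ℝ) / 2) * (U.det) ^ (-(1 : ℝ) / 2) * √(2 * π / (e ⬝ᵥ U⁻¹ *ᵥ e)) *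
        (τ ^ (-(n : ℝ)) * Real.exp (-(c / 2) / τ ^ 2)) := fun τ (hτ : 0 < τ) => by
    rw [integral_mul_const, integral_const_mul,
      hA_symm.integral_exp_neg_dotProduct_sub_smul_mulVec_div x e hs.ne' hτ.le, hc_eq]
    field_simp
  rw [hQ, setIntegral_congr_fun measurableSet_Ioi hinner, integral_const_mul,
    integral_rpow_neg_mul_exp_neg_div_sq (by exact_mod_cast (by omega : 1 < n)) (half_pos hc)]
  exact locationScale_marginal_constant hU.det_pos hs hc
end

section
/- Under the location-scale model with n = 2 observations, positive definite 2×2 matrix U_ℓ and improper prior π(μ,τ) ∝ 1/τ, the marginal density of x_ℓ ∈ R² equals 1 / (2·√(det(U_ℓ) · (x_ℓᵀQ_ℓx_ℓ) · (1₂ᵀU_ℓ⁻¹1₂))), where Q_ℓ = U_ℓ⁻¹ - (U_ℓ⁻¹1₂1₂ᵀU_ℓ⁻¹)/(1₂ᵀU_ℓ⁻¹1₂) and 1₂ = (1,1)ᵀ, provided the two components of x_ℓ are not equal. -/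
/-!
Write `a = 1ᵀU⁻¹1`, `b = xᵀU⁻¹1`, `c = xᵀU⁻¹x`. The exponent is the quadratic `aμ² - 2bμ + c` in `μ`;
completing the square, the Gaussian integral over `μ` equals `τ √(2π/a) exp(-k/(2τ²))` with
`k = c - b²/a = xᵀQx`, and the substitution `s = 1/τ` turns the remaining integral of
`τ⁻² exp(-k/(2τ²))` into the half-Gaussian `√(π/(2k))`. Here `k > 0` is the strict Cauchy–Schwarz
inequality for the inner product `U⁻¹`, since `x` is not a multiple of `1`.
-/

open Matrix Real MeasureTheory

namespace Matrix

variable {n : Type*} [Fintype n]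

lemma IsSymm.dotProduct_mulVec_comm_s6 {R : Type*} [CommRing R] {V : Matrix n n R} (hV : V.IsSymm)
    (x y : n → R) : y ⬝ᵥ (V *ᵥ x) = x ⬝ᵥ (V *ᵥ y) := by
  rw [dotProduct_mulVec, dotProduct_comm, ← vecMul_transpose, hV.eq]

lemma IsSymm.dotProduct_mulVec_sub_smul {R : Type*} [CommRing R] {V : Matrix n n R}
    (hV : V.IsSymm) (x v : n → R) (μ : R) :
    (x - μ • v) ⬝ᵥ (V *ᵥ (x - μ • v)) =
      (v ⬝ᵥ (V *ᵥ v)) * μ ^ 2 - 2 * (x ⬝ᵥ (V *ᵥ v)) * μ + x ⬝ᵥ (V *ᵥ x) := by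
  simp only [mulVec_sub, mulVec_smul, sub_dotProduct, dotProduct_sub, smul_dotProduct,
    dotProduct_smul, smul_eq_mul, hV.dotProduct_mulVec_comm_s6 x v]
  ring

lemma PosDef.dotProduct_mulVec_sub_sq_div_pos {V : Matrix n n ℝ} (hV : V.PosDef) {x v : n → ℝ}
    (hx : ∀ t : ℝ, x ≠ t • v) :
    0 < x ⬝ᵥ (V *ᵥ x) - (x ⬝ᵥ (V *ᵥ v)) ^ 2 / (v ⬝ᵥ (V *ᵥ v)) := by
  have hpos := hV.dotProduct_mulVec_pos
    (sub_ne_zero.2 (hx ((x ⬝ᵥ (V *ᵥ v)) / (v ⬝ᵥ (V *ᵥ v)))))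
  rw [star_trivial, (isHermitian_iff_isSymm.mp hV.isHermitian).dotProduct_mulVec_sub_smul] at hpos
  have complete_sq : ∀ a b c : ℝ, a * (b / a) ^ 2 - 2 * b * (b / a) + c = c - b ^ 2 / a := by
    intro a b c
    rcases eq_or_ne a 0 with rfl | ha
    · simp
    · field_simp
      ring
  rwa [complete_sq] at hpos

lemma dotProduct_sub_smul_vecMulVec_mulVec {K : Type*} [Field K] (V : Matrix n n K)
    (w x : n → K) (a : K) :
    x ⬝ᵥ ((V - a⁻¹ • vecMulVec w w) *ᵥ x) = x ⬝ᵥ (V *ᵥ x) - (x ⬝ᵥ w) ^ 2 / a := by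
  simp only [sub_mulVec, smul_mulVec, vecMulVec_mulVec, dotProduct_sub, dotProduct_smul,
    smul_eq_mul, op_smul_eq_mul, dotProduct_comm w x]
  ring

end Matrix

lemma integral_exp_neg_quadratic_div {a τ : ℝ} (b c : ℝ) (ha : 0 < a) (hτ : 0 < τ) :
    ∫ μ : ℝ, exp (-(a * μ ^ 2 - 2 * b * μ + c) / (2 * τ ^ 2)) =
      τ * √(2 * π / a) * exp (-(c - b ^ 2 / a) / (2 * τ ^ 2)) := by
  have hsq : ∀ μ : ℝ, -(a * μ ^ 2 - 2 * b * μ + c) / (2 * τ ^ 2) =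
      -(a / (2 * τ ^ 2)) * (μ - b / a) ^ 2 + -(c - b ^ 2 / a) / (2 * τ ^ 2) := by
    intro μ; field_simp; ring
  simp only [hsq, exp_add]
  rw [integral_mul_const, integral_sub_right_eq_self (fun t ↦ exp (-(a / (2 * τ ^ 2)) * t ^ 2)),
    integral_gaussian, show π / (a / (2 * τ ^ 2)) = 2 * π / a * τ ^ 2 by field_simp,
    sqrt_mul (by positivity), sqrt_sq hτ.le, mul_comm τ]

lemma integral_Ioi_exp_neg_div_sq_div_sq {k : ℝ} (hk : 0 < k) :
    ∫ τ in Set.Ioi (0 : ℝ), exp (-k / (2 * τ ^ 2)) / τ ^ 2 = √(2 * π / k) / 2 := by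
  have h := integral_comp_rpow_Ioi (fun s ↦ exp (-(k / 2) * s ^ 2)) (p := -1) (by norm_num)
  rw [integral_gaussian_Ioi, show π / (k / 2) = 2 * π / k by field_simp] at h
  rw [← h]
  refine setIntegral_congr_fun measurableSet_Ioi fun τ (hτ : 0 < τ) ↦ ?_
  simp only [rpow_neg_one, smul_eq_mul]
  norm_num
  field_simp

lemma integral_Ioi_integral_exp_neg_quadratic_div {a : ℝ} (b c : ℝ) (ha : 0 < a)
    (hk : 0 < c - b ^ 2 / a) :
    ∫ τ in Set.Ioi (0 : ℝ), ∫ μ : ℝ, exp (-(a * μ ^ 2 - 2 * b * μ + c) / (2 * τ ^ 2)) / τ ^ 3 =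
      π / √(a * (c - b ^ 2 / a)) := by
  calc _ = ∫ τ in Set.Ioi (0 : ℝ),
        √(2 * π / a) * (exp (-(c - b ^ 2 / a) / (2 * τ ^ 2)) / τ ^ 2) := by
        refine setIntegral_congr_fun measurableSet_Ioi fun τ (hτ : 0 < τ) ↦ ?_
        rw [integral_div, integral_exp_neg_quadratic_div b c ha hτ]
        field_simp
    _ = π / √(a * (c - b ^ 2 / a)) := by
        generalize c - b ^ 2 / a = k at hk ⊢
        rw [integral_const_mul, integral_Ioi_exp_neg_div_sq_div_sq hk, sqrt_div' _ ha.le,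
          sqrt_div' _ hk.le, sqrt_mul ha.le]
        have : √(2 * π) ^ 2 = 2 * π := sq_sqrt (by positivity)
        field_simp
        linear_combination this

theorem stmt6 (U : Matrix (Fin 2) (Fin 2) ℝ) (hU : U.PosDef)
    (x : Fin 2 → ℝ) (hx : x 0 ≠ x 1) :
    (∫ τ in Set.Ioi (0 : ℝ), ∫ μ : ℝ,
        (2 * π)⁻¹ * τ ^ (-(2 : ℝ)) * (U.det) ^ (-(1 : ℝ) / 2) *
          Real.exp (-((x - μ • (fun _ => 1 : Fin 2 → ℝ)) ⬝ᵥ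
              (U⁻¹ *ᵥ (x - μ • (fun _ => 1 : Fin 2 → ℝ)))) / (2 * τ ^ 2)) * (1 / τ)) =
      1 / (2 * Real.sqrt (U.det *
          (x ⬝ᵥ ((U⁻¹ -
              ((fun _ => 1 : Fin 2 → ℝ) ⬝ᵥ (U⁻¹ *ᵥ (fun _ => 1 : Fin 2 → ℝ)))⁻¹ •
                vecMulVec (U⁻¹ *ᵥ (fun _ => 1 : Fin 2 → ℝ))
                  (U⁻¹ *ᵥ (fun _ => 1 : Fin 2 → ℝ))) *ᵥ x)) *
          ((fun _ => 1 : Fin 2 → ℝ) ⬝ᵥ (U⁻¹ *ᵥ (fun _ => 1 : Fin 2 → ℝ))))) := by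
  set one : Fin 2 → ℝ := fun _ => 1
  have hV : (U⁻¹).PosDef := hU.inv
  have ha : 0 < one ⬝ᵥ (U⁻¹ *ᵥ one) := by
    simpa using hV.dotProduct_mulVec_pos (x := one) (Function.ne_iff.2 ⟨0, one_ne_zero⟩)
  have hk : 0 < x ⬝ᵥ (U⁻¹ *ᵥ x) - (x ⬝ᵥ (U⁻¹ *ᵥ one)) ^ 2 / (one ⬝ᵥ (U⁻¹ *ᵥ one)) :=
    hV.dotProduct_mulVec_sub_sq_div_pos fun t h ↦ hx (by simp [h, one])
  simp_rw [(isHermitian_iff_isSymm.mp hV.isHermitian).dotProduct_mulVec_sub_smul,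
    dotProduct_sub_smul_vecMulVec_mulVec]
  generalize one ⬝ᵥ (U⁻¹ *ᵥ one) = a at ha hk ⊢
  generalize x ⬝ᵥ (U⁻¹ *ᵥ one) = b at hk ⊢
  generalize x ⬝ᵥ (U⁻¹ *ᵥ x) = c at hk ⊢
  calc _ = ∫ τ in Set.Ioi (0 : ℝ), ((2 * π)⁻¹ * U.det ^ (-(1 : ℝ) / 2)) *
        ∫ μ : ℝ, exp (-(a * μ ^ 2 - 2 * b * μ + c) / (2 * τ ^ 2)) / τ ^ 3 := by
        refine setIntegral_congr_fun measurableSet_Ioi fun τ (hτ : 0 < τ) ↦ ?_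
        rw [← integral_const_mul]
        congr 1 with μ
        rw [rpow_neg hτ.le, rpow_two]
        field_simp
    _ = _ := by
        rw [integral_const_mul, integral_Ioi_integral_exp_neg_quadratic_div b c ha hk]
        generalize c - b ^ 2 / a = k at hk ⊢
        rw [show -(1 : ℝ) / 2 = -(1 / 2) by ring, rpow_neg hU.det_pos.le, ← sqrt_eq_rpow,
          sqrt_mul ha.le, sqrt_mul (mul_pos hU.det_pos hk).le, sqrt_mul hU.det_pos.le]
        field_simp
end

section
/- For the random effects reference prior π(τ) = √(τ² · tr((U + τ²I)⁻²)) with U symmetric positive definite, π is continuous on (0,∞), satisfies π(τ) → 0 as τ → 0⁺, and π(τ) ~ √n / τ as τ → ∞ (i.e., τ·π(τ) → √n). -/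
open Matrix Real Filter

/-! Since `U + τ²I` is positive definite for every real `τ`, the map `τ ↦ tr((U + τ²I)⁻²)` is
continuous on all of `ℝ`; hence the prior is continuous and `π(0) = 0`. For `τ ≠ 0`, factoring
`U + τ²I = τ² (τ⁻²U + I)` gives `τ² π(τ)² = tr((τ⁻²U + I)⁻²)`, which tends to `tr I = n`
as `τ → ∞`, the inverse being continuous at the invertible matrix `I`. -/

namespace Matrix

variable {ι : Type*} [DecidableEq ι]

theorem PosDef.add_smul_one {U : Matrix ι ι ℝ} (hU : U.PosDef) {c : ℝ} (hc : 0 ≤ c) :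
    (U + c • 1).PosDef :=
  hU.add_posSemidef (PosSemidef.one.smul hc)

variable [Fintype ι]

theorem inv_smul_of_ne_zero {K : Type*} [Field K] (A : Matrix ι ι K) {k : K} (hk : k ≠ 0) :
    (k • A)⁻¹ = k⁻¹ • A⁻¹ := by
  by_cases hA : IsUnit A.det
  · exact inv_smul' A (Units.mk0 k hk) hA
  · have hkA : ¬IsUnit (k • A).det := by
      rwa [det_smul, IsUnit.mul_iff, and_iff_right ((Ne.isUnit hk).pow _)]
    rw [nonsing_inv_apply_not_isUnit _ hA, nonsing_inv_apply_not_isUnit _ hkA, smul_zero]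

theorem mul_mul_trace_inv_mul_inv_add_smul_one {K : Type*} [Field K] (U : Matrix ι ι K)
    {c : K} (hc : c ≠ 0) :
    c * c * ((U + c • 1)⁻¹ * (U + c • 1)⁻¹).trace =
      ((c⁻¹ • U + 1)⁻¹ * (c⁻¹ • U + 1)⁻¹).trace := by
  have hfactor : U + c • 1 = c • (c⁻¹ • U + 1) := by
    rw [smul_add, smul_smul, mul_inv_cancel₀ hc, one_smul]
  rw [hfactor, inv_smul_of_ne_zero _ hc, smul_mul_smul_comm, trace_smul, smul_eq_mul,
    ← mul_assoc, ← mul_inv, mul_inv_cancel₀ (mul_ne_zero hc hc), one_mul]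

end Matrix

section MatrixInverse

variable {X ι K : Type*} [TopologicalSpace X] [Fintype ι] [DecidableEq ι] [Field K]
  [TopologicalSpace K] [IsTopologicalDivisionRing K]

theorem ContinuousAt.matrix_inv {A : X → Matrix ι ι K} {x : X} (hA : ContinuousAt A x)
    (hdet : (A x).det ≠ 0) : ContinuousAt (fun y => (A y)⁻¹) x :=
  (continuousAt_matrix_inv _ (by rw [Ring.inverse_eq_inv']; exact continuousAt_inv₀ hdet)).comp hA

theorem Continuous.matrix_inv {A : X → Matrix ι ι K} (hA : Continuous A)
    (hdet : ∀ x, (A x).det ≠ 0) : Continuous fun x => (A x)⁻¹ :=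
  continuous_iff_continuousAt.2 fun x => hA.continuousAt.matrix_inv (hdet x)

end MatrixInverse

variable {ι : Type*} [Fintype ι] [DecidableEq ι]

theorem continuous_trace_inv_mul_inv_add_sq_smul_one {U : Matrix ι ι ℝ} (hU : U.PosDef) :
    Continuous fun τ : ℝ => ((U + τ ^ 2 • 1)⁻¹ * (U + τ ^ 2 • 1)⁻¹).trace := by
  have hinv : Continuous fun τ : ℝ => (U + τ ^ 2 • 1)⁻¹ :=
    Continuous.matrix_inv (by fun_prop) fun τ => (hU.add_smul_one (sq_nonneg τ)).det_pos.ne'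
  exact (hinv.mul hinv).matrix_trace

theorem tendsto_trace_inv_mul_inv_smul_add_one (U : Matrix ι ι ℝ) :
    Tendsto (fun s : ℝ => ((s • U + 1)⁻¹ * (s • U + 1)⁻¹).trace) (nhds 0)
      (nhds (Fintype.card ι)) := by
  have hinv : ContinuousAt (fun s : ℝ => (s • U + 1)⁻¹) 0 :=
    ContinuousAt.matrix_inv (by fun_prop) (by simp)
  simpa [Function.comp_def] using (continuous_id.matrix_trace.tendsto _).comp (hinv.mul hinv)

theorem stmt12_general {n : ℕ} (U : Matrix (Fin n) (Fin n) ℝ) (hU : U.PosDef) :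
    let prior : ℝ → ℝ := fun τ =>
      Real.sqrt (τ ^ 2 * (((U + τ ^ 2 • (1 : Matrix (Fin n) (Fin n) ℝ))⁻¹ *
        (U + τ ^ 2 • (1 : Matrix (Fin n) (Fin n) ℝ))⁻¹).trace))
    ContinuousOn prior (Set.Ioi 0) ∧
    Tendsto prior (nhdsWithin 0 (Set.Ioi 0)) (nhds 0) ∧
    Tendsto (fun τ => τ * prior τ) atTop (nhds (Real.sqrt n)) := by
  intro prior
  have hprior : Continuous prior :=
    continuous_sqrt.comp ((continuous_pow 2).mul (continuous_trace_inv_mul_inv_add_sq_smul_one hU))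
  refine ⟨hprior.continuousOn, ?_, ?_⟩
  · simpa [prior] using (hprior.tendsto 0).mono_left nhdsWithin_le_nhds
  · have hscale : Tendsto (fun τ : ℝ => (τ ^ 2)⁻¹) atTop (nhds 0) :=
      tendsto_inv_atTop_zero.comp (tendsto_pow_atTop two_ne_zero)
    have hlim := (continuous_sqrt.tendsto _).comp
      ((tendsto_trace_inv_mul_inv_smul_add_one U).comp hscale)
    rw [Fintype.card_fin] at hlim
    refine hlim.congr' ?_
    filter_upwards [eventually_gt_atTop 0] with τ hτ
    have hτ2 : τ ^ 2 ≠ 0 := pow_ne_zero 2 hτ.ne'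
    simp only [Function.comp_apply, prior]
    rw [← mul_mul_trace_inv_mul_inv_add_smul_one U hτ2, mul_assoc, sqrt_mul (sq_nonneg τ),
      sqrt_sq hτ.le]

theorem stmt12 {n : ℕ} (hn : 0 < n) (U : Matrix (Fin n) (Fin n) ℝ) (hU : U.PosDef) :
    let prior : ℝ → ℝ := fun τ =>
      Real.sqrt (τ ^ 2 * (((U + τ ^ 2 • (1 : Matrix (Fin n) (Fin n) ℝ))⁻¹ *
        (U + τ ^ 2 • (1 : Matrix (Fin n) (Fin n) ℝ))⁻¹).trace))
    ContinuousOn prior (Set.Ioi 0) ∧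
    Tendsto prior (nhdsWithin 0 (Set.Ioi 0)) (nhds 0) ∧
    Tendsto (fun τ => τ * prior τ) atTop (nhds (Real.sqrt n)) :=
  stmt12_general U hU
end
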